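/- arXiv:1103.0170 — 4 statements merged into one kernel-verified Lean document; each statement's English description precedes it below -/
import Mathlib

section
/- For any differential ring (R,d), any commutative ring S with identity, and any ring homomorphism f : R → S, the map f̃ : R → HS defined by f̃(r) = (f(r), f(d(r)), f(d²(r)), …) is a differential ring homomorphism from (R,d) to (HS, ∂_S) with π₀ ∘ f̃ = f, and it is the unique differential ring homomorphism (R,d) → (HS, ∂_S) whose composition with π₀ equals f. -/
open scoped BigOperators

set_option linter.unusedSectionVars false

/-- The ring of Hurwitz series over `R`: all sequences `ℕ → R`, with termwise addition and
the Hurwitz (binomial-convolution) product. -/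
def HS (R : Type*) : Type _ := ℕ → R

namespace HS

variable {R : Type*} [CommRing R]

instance : AddCommGroup (HS R) := Pi.addCommGroup

instance {S : Type*} [Semiring S] [Module S R] : Module S (HS R) :=
  Pi.module ℕ (fun _ => R) S

@[simp] theorem add_apply (a b : HS R) (n : ℕ) : (a + b) n = a n + b n := rfl
@[simp] theorem zero_apply (n : ℕ) : (0 : HS R) n = 0 := rfl
@[simp] theorem smul_apply {S : Type*} [Semiring S] [Module S R] (c : S) (a : HS R) (n : ℕ) :
    (c • a) n = c • a n := rfl

instance : Mul (HS R) :=
  ⟨fun a b n => ∑ j ∈ Finset.range (n + 1), (n.choose j : R) * a j * b (n - j)⟩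

theorem mul_apply (a b : HS R) (n : ℕ) :
    (a * b) n = ∑ j ∈ Finset.range (n + 1), (n.choose j : R) * a j * b (n - j) := rfl

instance : One (HS R) := ⟨fun n => if n = 0 then 1 else 0⟩

theorem one_apply (n : ℕ) : (1 : HS R) n = if n = 0 then 1 else 0 := rfl

private theorem hmul_comm (a b : HS R) : a * b = b * a := by
  funext n
  rw [mul_apply, mul_apply, ← Finset.sum_range_reflect]
  refine Finset.sum_congr rfl fun j hj => ?_
  have hj' : j ≤ n := Nat.lt_succ_iff.mp (Finset.mem_range.mp hj)
  have h1 : n + 1 - 1 - j = n - j := by omega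
  rw [h1, Nat.choose_symm hj', Nat.sub_sub_self hj']
  ring

private theorem hone_mul (a : HS R) : 1 * a = a := by
  funext n
  rw [mul_apply]
  rw [Finset.sum_eq_single 0]
  · simp [one_apply]
  · intro j hj hj0
    simp [one_apply, hj0]
  · intro h
    exact absurd (Finset.mem_range.mpr (Nat.succ_pos n)) h

private theorem hmul_assoc (a b c : HS R) : a * b * c = a * (b * c) := by
  funext n
  rw [mul_apply, mul_apply]
  simp_rw [mul_apply, Finset.mul_sum]
  simp_rw [Finset.sum_mul]
  rw [Finset.sum_sigma', Finset.sum_sigma']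
  refine Finset.sum_nbij' (fun x => ⟨x.2, x.1 - x.2⟩) (fun x => ⟨x.1 + x.2, x.1⟩)
    ?_ ?_ ?_ ?_ ?_
  · rintro ⟨p, i⟩ h
    simp only [Finset.mem_sigma, Finset.mem_range] at h ⊢
    omega
  · rintro ⟨i, j⟩ h
    simp only [Finset.mem_sigma, Finset.mem_range] at h ⊢
    omega
  · rintro ⟨p, i⟩ h
    simp only [Finset.mem_sigma, Finset.mem_range] at h
    dsimp only
    exact congrArg (fun m => (⟨m, i⟩ : Σ _ : ℕ, ℕ)) (by omega)
  · rintro ⟨i, j⟩ h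
    simp only [Finset.mem_sigma, Finset.mem_range] at h
    dsimp only
    exact congrArg (fun m => (⟨i, m⟩ : Σ _ : ℕ, ℕ)) (by omega)
  · rintro ⟨p, i⟩ h
    simp only [Finset.mem_sigma, Finset.mem_range] at h
    have hip : i ≤ p := by omega
    have hpn : p ≤ n := by omega
    have h2 : n - i - (p - i) = n - p := by omega
    have h3 : (n.choose p : R) * (p.choose i : R)
        = (n.choose i : R) * ((n - i).choose (p - i) : R) := by
      rw [← Nat.cast_mul, ← Nat.cast_mul, Nat.choose_mul hip]
    simp only [h2]
    calc ((n.choose p : R) * ((p.choose i : R) * a i * b (p - i)) * c (n - p))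
        = ((n.choose p : R) * (p.choose i : R)) * (a i * b (p - i) * c (n - p)) := by ring
      _ = ((n.choose i : R) * ((n - i).choose (p - i) : R)) * (a i * b (p - i) * c (n - p)) := by
          rw [h3]
      _ = (n.choose i : R) * a i * (((n - i).choose (p - i) : R) * b (p - i) * c (n - p)) := by
          ring

instance : CommRing (HS R) :=
  { (inferInstance : AddCommGroup (HS R)) with
    mul := (· * ·)
    one := (1 : HS R)
    mul_assoc := hmul_assoc
    one_mul := hone_mul
    mul_one := fun a => by rw [hmul_comm]; exact hone_mul a
    left_distrib := fun a b c => by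
      funext n
      simp only [mul_apply, add_apply]
      rw [← Finset.sum_add_distrib]
      exact Finset.sum_congr rfl fun j _ => by ring
    right_distrib := fun a b c => by
      funext n
      simp only [mul_apply, add_apply]
      rw [← Finset.sum_add_distrib]
      exact Finset.sum_congr rfl fun j _ => by ring
    zero_mul := fun a => by funext n; simp [mul_apply]
    mul_zero := fun a => by funext n; simp [mul_apply]
    mul_comm := hmul_comm }

/-- The derivation `∂` on Hurwitz series: the left-shift. -/
def D (a : HS R) : HS R := fun n => a (n + 1)

@[simp] theorem D_apply (a : HS R) (n : ℕ) : D a n = a (n + 1) := rfl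

/-- The exponential `exp β = (1, β, β², …)`. -/
def hexp (b : R) : HS R := fun n => b ^ n

@[simp] theorem hexp_apply (b : R) (n : ℕ) : hexp b n = b ^ n := rfl

/-- The divided power `x^{[i]}`: the sequence with `1` in position `i` and `0` elsewhere. -/
def dpow (i : ℕ) : HS R := fun n => if n = i then 1 else 0

/-- The constant Hurwitz series `(r, 0, 0, …)`. -/
def const (r : R) : HS R := fun n => if n = 0 then r else 0

/-- Entrywise map of a Hurwitz series along a map of coefficients. -/
def map {K L : Type*} (f : K → L) (a : HS K) : HS L := fun n => f (a n)

/-- `σ` is a differential automorphism of the subspace `V` of `HS k`: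
a `k`-linear automorphism of `V` commuting with the derivation `D`. -/
def IsDiffAut {k : Type*} [Field k] (V : Submodule k (HS k)) (σ : V ≃ₗ[k] V) : Prop :=
  ∀ v w : V, (w : HS k) = D (v : HS k) → (σ w : HS k) = D (σ v : HS k)

end HS

/-- The nilpotent upper Jordan block of size `m` (ones on the superdiagonal). -/
def jordanBlock (k : Type*) [Field k] (m : ℕ) : Matrix (Fin m) (Fin m) k :=
  Matrix.of fun i j => if (i : ℕ) + 1 = (j : ℕ) then 1 else 0

/-- The centralizer of a matrix `A` inside `GL(m, k)`, as a set of matrices. -/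
def matCent {k : Type*} [Field k] {m : ℕ} (A : Matrix (Fin m) (Fin m) k) :
    Set (Matrix (Fin m) (Fin m) k) :=
  {T | IsUnit T ∧ A * T = T * A}

/-- The group `U(m, k)` of upper triangular matrices in `GL(m, k)` with all diagonal
entries equal to `1`, as a set of matrices. -/
def uniUpper (k : Type*) [Field k] (m : ℕ) : Set (Matrix (Fin m) (Fin m) k) :=
  {T | IsUnit T ∧ (∀ i, T i i = 1) ∧ ∀ i j : Fin m, (j : ℕ) < (i : ℕ) → T i j = 0}


/-! The general Leibniz rule `dⁿ(ab) = ∑ C(n, j) dʲa dⁿ⁻ʲb` is precisely the Hurwitz product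
formula, so `r ↦ (f (dⁿ r))ₙ` is a ring homomorphism, and it intertwines `d` with the shift by
`dⁿ⁺¹ = dⁿ ∘ d`. Conversely, a map `g` intertwining `d` with the shift has `g r n = g (dⁿ r) 0`,
so it is determined by `π₀ ∘ g`. -/

namespace Derivation

open Finset

variable {A R : Type*} [CommSemiring A] [CommSemiring R] [Algebra A R] (d : Derivation A R R)

theorem iterate_apply_mul (n : ℕ) (a b : R) :
    (⇑d)^[n] (a * b) =
      ∑ ij ∈ antidiagonal n, n.choose ij.1 • ((⇑d)^[ij.1] a * (⇑d)^[ij.2] b) := by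
  induction n with
  | zero => simp
  | succ n ih =>
    rw [sum_antidiagonal_choose_succ_nsmul (fun i j => (⇑d)^[i] a * (⇑d)^[j] b) n]
    simp only [Function.iterate_succ_apply', ih, map_sum, map_nsmul, leibniz, smul_eq_mul,
      smul_add, sum_add_distrib]
    congr 1
    refine sum_congr rfl fun ⟨i, j⟩ hij => ?_
    rw [n.choose_symm_of_eq_add (mem_antidiagonal.1 hij).symm, mul_comm]

theorem iterate_apply_mul' (n : ℕ) (a b : R) :
    (⇑d)^[n] (a * b) = ∑ i ∈ range (n + 1), n.choose i • ((⇑d)^[i] a * (⇑d)^[n - i] b) := by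
  rw [d.iterate_apply_mul n a b]
  exact Nat.sum_antidiagonal_eq_sum_range_succ
    (fun i j => n.choose i • ((⇑d)^[i] a * (⇑d)^[j] b)) n

theorem iterate_succ_apply_one (n : ℕ) : (⇑d)^[n + 1] (1 : R) = 0 := by
  rw [Function.iterate_succ_apply, map_one_eq_zero, iterate_map_zero]

end Derivation

namespace HS

variable {A R S : Type*} [CommSemiring A] [CommSemiring R] [Algebra A R] [CommRing S]

def lift (d : Derivation A R R) (f : R →+* S) : R →+* HS S where
  toFun r n := f ((⇑d)^[n] r)
  map_one' := by
    funext n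
    cases n with
    | zero => simp [one_apply]
    | succ n => simp [one_apply, d.iterate_succ_apply_one]
  map_mul' a b := by
    funext n
    show f ((⇑d)^[n] (a * b)) =
      ∑ i ∈ Finset.range (n + 1), (n.choose i : S) * f ((⇑d)^[i] a) * f ((⇑d)^[n - i] b)
    simp only [d.iterate_apply_mul', map_sum, nsmul_eq_mul, map_mul, map_natCast, mul_assoc]
  map_zero' := by
    funext n
    show f _ = 0
    rw [iterate_map_zero, map_zero]
  map_add' a b := by
    funext n
    show f _ = f _ + f _
    rw [iterate_map_add, map_add]

variable (d : Derivation A R R) (f : R →+* S)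

theorem lift_apply (r : R) (n : ℕ) : lift d f r n = f ((⇑d)^[n] r) := rfl

theorem lift_apply_zero (r : R) : lift d f r 0 = f r := rfl

theorem lift_derivation (r : R) : lift d f (d r) = D (lift d f r) := rfl

theorem eq_lift_of_commute {g : R → HS S} (hD : ∀ r, g (d r) = D (g r))
    (h0 : ∀ r, g r 0 = f r) : g = lift d f := by
  funext r n
  induction n generalizing r with
  | zero => exact h0 r
  | succ n ih => rw [show g r (n + 1) = g (d r) n by rw [hD]; rfl, ih]; rfl

end HS

/-- For any differential ring `(R, d)`, any commutative ring `S`, and any ring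
homomorphism `f : R → S`, the map `f̃(r) = (f r, f (d r), f (d² r), …)` is a (differential) ring
homomorphism `(R, d) → (HS S, ∂)` with `π₀ ∘ f̃ = f`, and it is the unique differential ring
homomorphism whose composition with `π₀` equals `f`. -/
theorem stmt_0 {R S : Type*} [CommRing R] [CommRing S]
    (d : Derivation ℤ R R) (f : R →+* S) :
    ∃ g : R →+* HS S,
      (∀ (r : R) (n : ℕ), g r n = f ((⇑d)^[n] r)) ∧
      (∀ r : R, g (d r) = HS.D (g r)) ∧
      (∀ r : R, g r 0 = f r) ∧
      ∀ g' : R →+* HS S,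
        ((∀ r : R, g' (d r) = HS.D (g' r)) ∧ ∀ r : R, g' r 0 = f r) → g' = g :=
  ⟨HS.lift d f, HS.lift_apply d f, HS.lift_derivation d f, HS.lift_apply_zero d f,
    fun _ ⟨hD, h0⟩ => DFunLike.coe_injective (HS.eq_lift_of_commute d f hD h0)⟩
end

section
/- Let k be a field, let α ∈ k, and let V = {c·exp(α) : c ∈ k} ⊆ Hk, which is the full set of solutions in Hk of ∂(y) = α·y. Then for each σ ∈ G(V|k) there is a unique c_σ ∈ k* with σ(exp(α)) = c_σ·exp(α), and the map σ ↦ c_σ is a group isomorphism from G(V|k) onto the multiplicative group (k*, ×). -/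
open scoped BigOperators

set_option linter.unusedSectionVars false

/-!
`exp α` is the solution of `∂y = α • y` with `y 0 = 1`, and the equation determines every
solution from its `0`-th entry, so `V` is the line `k • exp α` and reading off the `0`-th
entry is a coordinate on it. A linear automorphism of a line is multiplication by a unit, and
every such homothety commutes with `∂`; hence `σ ↦ (σ (exp α)) 0` identifies `G(V|k)` with `kˣ`.
-/

namespace HS

section CommRing

variable {R : Type*} [CommRing R]

theorem D_hexp (a : R) : D (hexp a) = a • hexp a := by
  funext n
  simp [pow_succ, mul_comm]

theorem eq_apply_zero_smul_hexp_of_D_eq_smul {a : R} {y : HS R} (h : D y = a • y) :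
    y = y 0 • hexp a := by
  funext n
  induction n with
  | zero => simp
  | succ n ih =>
    have hn := congrFun h n
    simp only [D_apply, smul_apply, smul_eq_mul] at hn
    rw [hn, ih]
    simp [pow_succ]
    ring

theorem mem_span_hexp_iff {a : R} {y : HS R} :
    y ∈ Submodule.span R {hexp a} ↔ D y = a • y := by
  refine ⟨fun hy => ?_, fun hy => ?_⟩
  · obtain ⟨c, rfl⟩ := Submodule.mem_span_singleton.1 hy
    rw [show D (c • hexp a) = c • D (hexp a) from rfl, D_hexp, smul_comm]
  · rw [eq_apply_zero_smul_hexp_of_D_eq_smul hy]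
    exact Submodule.smul_mem _ _ (Submodule.mem_span_singleton_self _)

end CommRing

section Line

variable {k : Type*} [Field k] {α : k} {V : Submodule k (HS k)}

theorem isDiffAut_smulOfUnit (c : kˣ) : IsDiffAut V (LinearEquiv.smulOfUnit c) := by
  intro v w hw
  show (((c : k) • w : V) : HS k) = D (((c : k) • v : V) : HS k)
  funext n
  simp [hw]

theorem coe_eq_apply_zero_smul_hexp (hV : V = Submodule.span k {hexp α}) (v : V) :
    (v : HS k) = (v : HS k) 0 • hexp α :=
  eq_apply_zero_smul_hexp_of_D_eq_smul (mem_span_hexp_iff.1 (hV ▸ v.2))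

theorem eq_apply_zero_smul (hV : V = Submodule.span k {hexp α}) (hmem : hexp α ∈ V) (v : V) :
    v = (v : HS k) 0 • (⟨hexp α, hmem⟩ : V) :=
  Subtype.ext (coe_eq_apply_zero_smul_hexp hV v)

theorem apply_hexp_apply_zero_ne_zero (hV : V = Submodule.span k {hexp α}) (hmem : hexp α ∈ V)
    (σ : V ≃ₗ[k] V) : (σ ⟨hexp α, hmem⟩ : HS k) 0 ≠ 0 := by
  intro h
  have hσ : σ ⟨hexp α, hmem⟩ = 0 := by
    rw [eq_apply_zero_smul hV hmem (σ _), h, zero_smul]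
  have := congrFun (congrArg Subtype.val (σ.map_eq_zero_iff.1 hσ)) 0
  simp at this

noncomputable def homothetyFactor (hV : V = Submodule.span k {hexp α}) (hmem : hexp α ∈ V)
    (σ : V ≃ₗ[k] V) : kˣ :=
  Units.mk0 ((σ ⟨hexp α, hmem⟩ : HS k) 0) (apply_hexp_apply_zero_ne_zero hV hmem σ)

variable (hV : V = Submodule.span k {hexp α}) (hmem : hexp α ∈ V)

theorem apply_eq_homothetyFactor_smul (σ : V ≃ₗ[k] V) (v : V) :
    σ v = (homothetyFactor hV hmem σ : k) • v := by
  conv_lhs => rw [eq_apply_zero_smul hV hmem v, map_smul, eq_apply_zero_smul hV hmem (σ _)]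
  rw [smul_comm, ← eq_apply_zero_smul hV hmem v]
  rfl

theorem coe_apply_hexp_eq_homothetyFactor_smul (σ : V ≃ₗ[k] V) :
    (σ ⟨hexp α, hmem⟩ : HS k) = (homothetyFactor hV hmem σ : k) • hexp α := by
  rw [apply_eq_homothetyFactor_smul hV hmem]
  rfl

theorem homothetyFactor_eq_of_apply_eq_smul {σ : V ≃ₗ[k] V} {c : kˣ}
    (h : (σ ⟨hexp α, hmem⟩ : HS k) = (c : k) • hexp α) : homothetyFactor hV hmem σ = c := by
  ext
  simpa [homothetyFactor] using congrFun h 0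

end Line

end HS

/-- for `V = {c • exp α | c ∈ k}`, the full solution set of `∂y = α•y`,
every differential automorphism `σ` of `V` satisfies `σ(exp α) = c_σ • exp α` for a unique
`c_σ ∈ kˣ`, and `σ ↦ c_σ` is a group isomorphism `G(V|k) ≅ (kˣ, ×)`. -/
theorem stmt_6 {k : Type*} [Field k] (α : k)
    (V : Submodule k (HS k)) (hV : V = Submodule.span k {HS.hexp α})
    (hmem : HS.hexp α ∈ V) :
    (V : Set (HS k)) = {y : HS k | HS.D y = α • y} ∧
    (∀ σ : {σ : V ≃ₗ[k] V // HS.IsDiffAut V σ},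
      ∃! c : kˣ, ((σ.1 ⟨HS.hexp α, hmem⟩ : V) : HS k) = (c : k) • HS.hexp α) ∧
    ∃ C : {σ : V ≃ₗ[k] V // HS.IsDiffAut V σ} → kˣ,
      (∀ σ, ((σ.1 ⟨HS.hexp α, hmem⟩ : V) : HS k) = (C σ : k) • HS.hexp α) ∧
      Function.Bijective C ∧
      ∀ σ τ ρ : {σ : V ≃ₗ[k] V // HS.IsDiffAut V σ},
        (∀ v : V, ρ.1 v = σ.1 (τ.1 v)) → C ρ = C σ * C τ := by
  have hC := HS.coe_apply_hexp_eq_homothetyFactor_smul hV hmem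
  refine ⟨hV ▸ Set.ext fun _ => HS.mem_span_hexp_iff, fun σ => ⟨_, hC σ.1, fun c hc =>
    (HS.homothetyFactor_eq_of_apply_eq_smul hV hmem hc).symm⟩,
    fun σ => HS.homothetyFactor hV hmem σ.1, fun σ => hC σ.1, ⟨?_, ?_⟩, ?_⟩
  · intro σ τ h
    refine Subtype.ext (LinearEquiv.ext fun v => ?_)
    rw [HS.apply_eq_homothetyFactor_smul hV hmem, HS.apply_eq_homothetyFactor_smul hV hmem]
    exact congrArg (fun c : kˣ => (c : k) • v) h
  · intro c
    refine ⟨⟨LinearEquiv.smulOfUnit c, HS.isDiffAut_smulOfUnit c⟩, ?_⟩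
    exact HS.homothetyFactor_eq_of_apply_eq_smul hV hmem rfl
  · intro σ τ ρ h
    refine HS.homothetyFactor_eq_of_apply_eq_smul hV hmem ?_
    rw [h, HS.apply_eq_homothetyFactor_smul hV hmem τ.1, map_smul,
      Submodule.coe_smul, hC, smul_smul, mul_comm]
    rfl
end

section
/- Let k be a field, let α_1, …, α_r ∈ k be distinct, let m_1, …, m_r ∈ ℕ, let z_{j,t} = x^{[j]}·exp(α_t) ∈ Hk for 0 ≤ j ≤ m_t, let V_t = Span_k{z_{j,t} : 0 ≤ j ≤ m_t}, and let V = V_1 + ⋯ + V_r. Then the sum is direct, V = ⊕_{t=1}^{r} V_t, and restriction induces a group isomorphism G(V|k) ≅ ⊕_{t=1}^{r} G(V_t|k). -/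
open scoped BigOperators

set_option linter.unusedSectionVars false

/-!
The operator `∂ - β` kills `exp β` and sends `x^{[j+1]} exp β` to `x^{[j]} exp β`, so `V_t` lies
in the generalized `α_t`-eigenspace of `∂`. Generalized eigenspaces for distinct eigenvalues are
independent, which makes the sum direct; by modularity of the lattice of subspaces this also gives
`V_t = V ∩ (generalized α_t-eigenspace of ∂)`. A map commuting with `∂` preserves generalized
eigenspaces, so every element of `G(V|k)` restricts to each `V_t`, and conversely automorphisms of
the summands commuting with `∂` glue to one of `V = ⊕ V_t`.
-/

open Submodule

namespace HS

variable {R : Type*} [CommRing R]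

def Dₗ : Module.End R (HS R) where
  toFun := D
  map_add' _ _ := rfl
  map_smul' _ _ := rfl

@[simp] theorem Dₗ_apply (a : HS R) : Dₗ a = D a := rfl

theorem dpow_mul_hexp_apply (j : ℕ) (β : R) (n : ℕ) :
    (dpow j * hexp β : HS R) n = n.choose j * β ^ (n - j) := by
  rw [mul_apply, Finset.sum_eq_single j]
  · simp [dpow]
  · intro i _ hij
    simp [dpow, hij]
  · intro hj
    rw [Nat.choose_eq_zero_of_lt (by simpa using hj)]
    simp

theorem D_dpow_zero_mul_hexp (β : R) :
    D (dpow 0 * hexp β : HS R) = β • (dpow 0 * hexp β) := by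
  funext n
  simp only [D_apply, smul_apply, dpow_mul_hexp_apply, Nat.choose_zero_right, Nat.sub_zero,
    pow_succ, smul_eq_mul]
  ring

theorem D_dpow_succ_mul_hexp (β : R) (j : ℕ) :
    D (dpow (j + 1) * hexp β : HS R) = dpow j * hexp β + β • (dpow (j + 1) * hexp β) := by
  funext n
  simp only [D_apply, add_apply, smul_apply, dpow_mul_hexp_apply, smul_eq_mul,
    Nat.add_sub_add_right]
  obtain h | rfl | h := lt_trichotomy n j
  · simp [Nat.choose_eq_zero_of_lt, h, Nat.lt_succ_of_lt h]
  · simp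
  · obtain ⟨d, rfl⟩ := Nat.exists_eq_add_of_lt h
    rw [Nat.choose_succ_succ', show j + d + 1 - j = d + 1 by omega,
      show j + d + 1 - (j + 1) = d by omega, pow_succ]
    push_cast
    ring

theorem dpow_mul_hexp_mem_genEigenspace (β : R) (j : ℕ) :
    (dpow j * hexp β : HS R) ∈ Dₗ.genEigenspace β ((j + 1 : ℕ) : ℕ∞) := by
  rw [Module.End.mem_genEigenspace_nat, LinearMap.mem_ker]
  induction j with
  | zero => simp [D_dpow_zero_mul_hexp]
  | succ j ih => rwa [pow_succ, Module.End.mul_apply, LinearMap.sub_apply, Dₗ_apply,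
      D_dpow_succ_mul_hexp, LinearMap.smul_apply, Module.End.one_apply, add_sub_cancel_right]

theorem span_dpow_mul_hexp_le_maxGenEigenspace (β : R) (M : ℕ) :
    span R (Set.range fun j : Fin (M + 1) => (dpow j * hexp β : HS R))
      ≤ Dₗ.maxGenEigenspace β :=
  span_le.2 <| Set.range_subset_iff.2 fun j =>
    Dₗ.genEigenspace_le_maximal β _ (dpow_mul_hexp_mem_genEigenspace β j)

theorem span_dpow_mul_hexp_le_comap_Dₗ (β : R) (M : ℕ) :
    span R (Set.range fun j : Fin (M + 1) => (dpow j * hexp β : HS R))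
      ≤ (span R (Set.range fun j : Fin (M + 1) => (dpow j * hexp β : HS R))).comap Dₗ := by
  refine span_le.2 (Set.range_subset_iff.2 ?_)
  rintro ⟨_ | i, hi⟩ <;> simp only [SetLike.mem_coe, mem_comap, Dₗ_apply]
  · rw [D_dpow_zero_mul_hexp]
    exact smul_mem _ β (subset_span ⟨⟨0, hi⟩, rfl⟩)
  · rw [D_dpow_succ_mul_hexp]
    exact add_mem (subset_span ⟨⟨i, by omega⟩, rfl⟩)
      (smul_mem _ β (subset_span ⟨⟨i + 1, hi⟩, rfl⟩))

end HS

theorem iSupIndep.iSup_inf_eq_of_le {α ι : Type*} [CompleteLattice α] [IsModularLattice α]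
    {F W : ι → α} (hF : iSupIndep F) (hWF : W ≤ F) (i : ι) : (⨆ j, W j) ⊓ F i = W i := by
  have hdisj : Disjoint (⨆ (j) (_ : j ≠ i), W j) (F i) :=
    (hF i).symm.mono_left (iSup₂_mono fun j _ => hWF j)
  rw [iSup_split_single W i, sup_inf_assoc_of_le _ (hWF i), hdisj.eq_bot, sup_bot_eq]

section LinearAlgebra

variable {R M N : Type*} [Ring R] [AddCommGroup M] [Module R M] [AddCommGroup N] [Module R N]

def LinearEquiv.restrictSubmodule {U V : Submodule R M} (σ : V ≃ₗ[R] V) (hUV : U ≤ V)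
    (h : ∀ v : V, (v : M) ∈ U → (σ v : M) ∈ U)
    (h' : ∀ v : V, (v : M) ∈ U → (σ.symm v : M) ∈ U) : U ≃ₗ[R] U :=
  have hmap : (U.comap V.subtype).map (σ : V →ₗ[R] V) = U.comap V.subtype :=
    le_antisymm (map_le_iff_le_comap.2 fun v hv => h v hv)
      fun v hv => ⟨σ.symm v, h' v hv, σ.apply_symm_apply v⟩
  (comapSubtypeEquivOfLe hUV).symm.trans
    ((σ.ofSubmodules _ _ hmap).trans (comapSubtypeEquivOfLe hUV))

@[simp] theorem LinearEquiv.coe_restrictSubmodule_apply {U V : Submodule R M} (σ : V ≃ₗ[R] V)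
    (hUV : U ≤ V) (h h') (u : U) :
    (σ.restrictSubmodule hUV h h' u : M) = σ ⟨u, hUV u.2⟩ := rfl

theorem Submodule.linearMap_ext_iSup {ι : Type*} {W : ι → Submodule R M}
    {f g : ↥(⨆ i, W i) →ₗ[R] N}
    (h : ∀ i w (hw : w ∈ W i), f ⟨w, mem_iSup_of_mem i hw⟩ = g ⟨w, mem_iSup_of_mem i hw⟩) :
    f = g := by
  ext ⟨v, hv⟩
  induction hv using iSup_induction' with
  | mem i w hw => exact h i w hw
  | zero => exact (map_zero f).trans (map_zero g).symm
  | add x y hx hy hfx hfy =>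
    exact (map_add f ⟨x, hx⟩ ⟨y, hy⟩).trans ((congrArg₂ _ hfx hfy).trans (map_add g _ _).symm)

variable {ι : Type*} [DecidableEq ι] {W : ι → Submodule R M}

noncomputable def iSupIndep.linearEquivISup (hW : iSupIndep W) : (Π₀ i, W i) ≃ₗ[R] ↥(⨆ i, W i) :=
  (LinearEquiv.ofInjective _ hW.dfinsupp_lsum_injective).trans
    (LinearEquiv.ofEq _ _ (iSup_eq_range_dfinsupp_lsum W).symm)

theorem iSupIndep.coe_linearEquivISup_single (hW : iSupIndep W) (i : ι) (w : W i) :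
    (hW.linearEquivISup (DFinsupp.single i w) : M) = w := by
  simp [linearEquivISup]

noncomputable def iSupIndep.iSupCongr (hW : iSupIndep W) (τ : ∀ i, W i ≃ₗ[R] W i) :
    ↥(⨆ i, W i) ≃ₗ[R] ↥(⨆ i, W i) :=
  hW.linearEquivISup.symm.trans ((DFinsupp.mapRange.linearEquiv τ).trans hW.linearEquivISup)

theorem iSupIndep.coe_iSupCongr_apply (hW : iSupIndep W) (τ : ∀ i, W i ≃ₗ[R] W i) (i : ι)
    (w : M) (hw : w ∈ W i) :
    (hW.iSupCongr τ ⟨w, mem_iSup_of_mem i hw⟩ : M) = τ i ⟨w, hw⟩ := by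
  have hsingle : (⟨w, mem_iSup_of_mem i hw⟩ : ↥(⨆ i, W i))
      = hW.linearEquivISup (DFinsupp.single i ⟨w, hw⟩) :=
    Subtype.ext (hW.coe_linearEquivISup_single i ⟨w, hw⟩).symm
  rw [iSupCongr, LinearEquiv.trans_apply, hsingle, LinearEquiv.symm_apply_apply,
    LinearEquiv.trans_apply, DFinsupp.mapRange.linearEquiv_apply, DFinsupp.mapRange_single,
    coe_linearEquivISup_single]

end LinearAlgebra

namespace HS

variable {k : Type*} [Field k]

section

variable {V : Submodule k (HS k)} {σ : V ≃ₗ[k] V}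

theorem isDiffAut_iff_commute (hDV : V ≤ V.comap Dₗ) :
    IsDiffAut V σ ↔ Commute (σ : Module.End k V) (Dₗ.restrict hDV) := by
  refine ⟨fun hσ => LinearMap.ext fun v => Subtype.ext (hσ v _ rfl), fun hσ v w hw => ?_⟩
  obtain rfl : w = Dₗ.restrict hDV v := Subtype.ext hw
  exact congrArg Subtype.val (LinearMap.congr_fun hσ v)

theorem IsDiffAut.symm (hDV : V ≤ V.comap Dₗ) (hσ : IsDiffAut V σ) : IsDiffAut V σ.symm := by
  rw [isDiffAut_iff_commute hDV] at hσ ⊢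
  refine LinearMap.ext fun v => σ.injective ?_
  have h := LinearMap.congr_fun hσ (σ.symm v)
  simp only [Module.End.mul_apply, LinearEquiv.coe_coe, LinearEquiv.apply_symm_apply] at h ⊢
  exact h.symm

theorem IsDiffAut.restrictSubmodule {U : Submodule k (HS k)} (hσ : IsDiffAut V σ) (hUV : U ≤ V)
    (h h') : IsDiffAut U (σ.restrictSubmodule hUV h h') :=
  fun v w hw => by
    simpa only [LinearEquiv.coe_restrictSubmodule_apply] using hσ ⟨v, hUV v.2⟩ ⟨w, hUV w.2⟩ hw

theorem IsDiffAut.mem_maxGenEigenspace (hDV : V ≤ V.comap Dₗ) (hσ : IsDiffAut V σ) {μ : k}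
    {v : V} (hv : (v : HS k) ∈ Dₗ.maxGenEigenspace μ) : (σ v : HS k) ∈ Dₗ.maxGenEigenspace μ := by
  have hmaps := Module.End.mapsTo_maxGenEigenspace_of_comm
    ((isDiffAut_iff_commute hDV).1 hσ).symm μ
  rw [Module.End.maxGenEigenspace, Module.End.genEigenspace_restrict] at hmaps
  exact hmaps hv

end

variable {ι : Type*} {μ : ι → k} {W : ι → Submodule k (HS k)}

theorem iSupIndep_of_le_maxGenEigenspace (hμ : Function.Injective μ)
    (hWμ : ∀ i, W i ≤ Dₗ.maxGenEigenspace (μ i)) : iSupIndep W :=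
  (Dₗ.independent_maxGenEigenspace.comp hμ).mono hWμ

theorem IsDiffAut.mem_of_le_maxGenEigenspace (hμ : Function.Injective μ)
    (hWμ : ∀ i, W i ≤ Dₗ.maxGenEigenspace (μ i)) (hDV : ⨆ i, W i ≤ (⨆ i, W i).comap Dₗ)
    {σ : ↥(⨆ i, W i) ≃ₗ[k] ↥(⨆ i, W i)} (hσ : IsDiffAut _ σ) {i : ι} {v : ↥(⨆ i, W i)}
    (hv : (v : HS k) ∈ W i) : (σ v : HS k) ∈ W i := by
  rw [← (Dₗ.independent_maxGenEigenspace.comp hμ).iSup_inf_eq_of_le hWμ i]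
  exact ⟨(σ v).2, hσ.mem_maxGenEigenspace hDV (hWμ i hv)⟩

theorem exists_restrict_isDiffAut_bijective [DecidableEq ι] (hμ : Function.Injective μ)
    (hWμ : ∀ i, W i ≤ Dₗ.maxGenEigenspace (μ i)) (hDW : ∀ i, W i ≤ (W i).comap Dₗ) :
    ∃ E : {σ : ↥(⨆ i, W i) ≃ₗ[k] ↥(⨆ i, W i) // IsDiffAut _ σ} →
        ∀ i, {τ : W i ≃ₗ[k] W i // IsDiffAut (W i) τ},
      (∀ σ i v, ((E σ i).1 v : HS k) = σ.1 ⟨v, mem_iSup_of_mem i v.2⟩) ∧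
        Function.Bijective E := by
  have hind := iSupIndep_of_le_maxGenEigenspace hμ hWμ
  have hDV : ⨆ i, W i ≤ (⨆ i, W i).comap Dₗ :=
    iSup_le fun i => (hDW i).trans (comap_mono (le_iSup W i))
  have hpres {σ} (hσ : IsDiffAut _ σ) (i) (v : ↥(⨆ i, W i)) (hv : (v : HS k) ∈ W i) :=
    hσ.mem_of_le_maxGenEigenspace hμ hWμ hDV hv
  refine ⟨fun σ i => ⟨σ.1.restrictSubmodule (le_iSup W i) (hpres σ.2 i)
    (hpres (σ.2.symm hDV) i), σ.2.restrictSubmodule _ _ _⟩, fun _ _ _ => rfl, ?_, ?_⟩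
  · intro σ σ' h
    refine Subtype.ext (LinearEquiv.toLinearMap_injective (linearMap_ext_iSup fun i w hw => ?_))
    exact Subtype.ext (congrArg (fun τ => ((τ i).1 ⟨w, hw⟩ : HS k)) h)
  · intro τ
    refine ⟨⟨hind.iSupCongr fun i => (τ i).1, (isDiffAut_iff_commute hDV).2 ?_⟩, ?_⟩
    · refine linearMap_ext_iSup fun i w hw => Subtype.ext ?_
      have hDw : Dₗ.restrict hDV ⟨w, mem_iSup_of_mem i hw⟩
          = ⟨Dₗ w, mem_iSup_of_mem i (hDW i hw)⟩ := rfl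
      simp only [Module.End.mul_apply, LinearEquiv.coe_coe, hDw, LinearMap.coe_restrict_apply]
      rw [hind.coe_iSupCongr_apply _ i _ (hDW i hw), hind.coe_iSupCongr_apply _ i w hw]
      exact (τ i).2 ⟨w, hw⟩ ⟨Dₗ w, hDW i hw⟩ rfl
    · exact funext fun i => Subtype.ext (LinearEquiv.ext fun w =>
        Subtype.ext (hind.coe_iSupCongr_apply _ i w w.2))

end HS

/-- for distinct `α₁, …, α_r` and `V_t = Span_k{x^{[j]} exp α_t | j ≤ m_t}`,
the sum `V = V₁ + ⋯ + V_r` is direct and restriction induces a group isomorphism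
`G(V|k) ≅ ⊕_t G(V_t|k)`. -/
theorem stmt_11 {k : Type*} [Field k] (r : ℕ) (α : Fin r → k) (hα : Function.Injective α)
    (m : Fin r → ℕ)
    (z : (t : Fin r) → Fin (m t + 1) → HS k)
    (hz : ∀ t j, z t j = HS.dpow (j : ℕ) * HS.hexp (α t))
    (W : Fin r → Submodule k (HS k)) (hW : ∀ t, W t = Submodule.span k (Set.range (z t)))
    (V : Submodule k (HS k)) (hV : V = ⨆ t, W t) (hWV : ∀ t, W t ≤ V) :
    (∀ f : Fin r → HS k, (∀ t, f t ∈ W t) → ∑ t, f t = 0 → ∀ t, f t = 0) ∧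
    ∃ E : {σ : V ≃ₗ[k] V // HS.IsDiffAut V σ} →
        ∀ t : Fin r, {σ : W t ≃ₗ[k] W t // HS.IsDiffAut (W t) σ},
      (∀ σ t (v : W t),
        (((E σ t).1 v : W t) : HS k) = ((σ.1 ⟨(v : HS k), hWV t v.2⟩ : V) : HS k)) ∧
      Function.Bijective E ∧
      ∀ σ τ ρ, (∀ v : V, ρ.1 v = σ.1 (τ.1 v)) →
        ∀ t (v : W t), (E ρ t).1 v = (E σ t).1 ((E τ t).1 v) := by
  have hWt : ∀ t, W t = span k (Set.range fun j : Fin (m t + 1) => HS.dpow j * HS.hexp (α t)) :=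
    fun t => (hW t).trans (congrArg _ (congrArg _ (funext (hz t))))
  have hWμ t : W t ≤ HS.Dₗ.maxGenEigenspace (α t) :=
    (hWt t).trans_le (HS.span_dpow_mul_hexp_le_maxGenEigenspace _ _)
  have hDW t : W t ≤ (W t).comap HS.Dₗ := hWt t ▸ HS.span_dpow_mul_hexp_le_comap_Dₗ _ _
  subst hV
  obtain ⟨E, hE, hbij⟩ := HS.exists_restrict_isDiffAut_bijective hα hWμ hDW
  refine ⟨fun f hf hsum t => ?_, E, hE, hbij, fun σ τ ρ hρ t v => Subtype.ext ?_⟩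
  · exact (iSupIndep_iff_finsetSum_eq_zero_imp_eq_zero W).1
      (HS.iSupIndep_of_le_maxGenEigenspace hα hWμ) Finset.univ f (fun t _ => hf t) hsum t
      (Finset.mem_univ t)
  · rw [hE, hE, hρ]
    exact congrArg (fun v => (σ.1 v : HS k)) (Subtype.ext (hE τ t v).symm)
end

section
/- Let k be a field with algebraic closure k̄, and regard Hk as a subring of Hk̄ via the entrywise inclusion k ⊆ k̄. Let n ≥ 1, a_0, …, a_{n−1} ∈ k, and L(y) = ∂ⁿ(y) + Σ_{i=0}^{n−1} a_i·∂ⁱ(y). If y_1, …, y_n ∈ Hk are k-linearly independent solutions of L(y) = 0, then y_1, …, y_n are linearly independent over k̄ as elements of Hk̄. -/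
open scoped BigOperators

set_option linter.unusedSectionVars false

/-! On coefficients, `∂ⁿy + ∑ aᵢ ∂ⁱy = 0` is a linear recurrence of order `n`, so a solution is
determined by its first `n` entries. Hence the `k`-independence of the `yⱼ` is the
`k`-independence of their initial-value vectors in `kⁿ`, and linear independence in `kⁿ`
survives extension of scalars to `k̄`. -/

namespace HS

variable {R : Type*} [CommRing R] {n : ℕ}

theorem D_iterate_apply (p : ℕ) (z : HS R) (m : ℕ) : D^[p] z m = z (m + p) := by
  induction p generalizing z with
  | zero => rfl
  | succ p ih =>
    rw [Function.iterate_succ_apply, ih, D_apply]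
    congr 1

theorem sum_apply {ι : Type*} (s : Finset ι) (f : ι → HS R) (m : ℕ) :
    (∑ i ∈ s, f i) m = ∑ i ∈ s, f i m :=
  Finset.sum_apply m s f

theorem const_mul_apply (r : R) (z : HS R) (m : ℕ) : (const r * z) m = r * z m := by
  rw [mul_apply, Finset.sum_eq_single_of_mem 0 (by simp)]
  · simp [const]
  · intro j _ hj
    simp [const, hj]

/-- The operator `∂ⁿ + ∑ aᵢ ∂ⁱ`, written out on coefficients. -/
def diffOp (a : Fin n → R) : HS R →ₗ[R] HS R where
  toFun z m := z (m + n) + ∑ i : Fin n, a i * z (m + i)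
  map_add' z w := by
    funext m
    change _ = (_ + _ : R)
    simp only [add_apply, mul_add, Finset.sum_add_distrib]
    ring
  map_smul' c z := by
    funext m
    change _ = c * (z (m + n) + ∑ i : Fin n, a i * z (m + i))
    simp only [smul_apply, smul_eq_mul, mul_add, Finset.mul_sum, mul_left_comm]

theorem diffOp_apply (a : Fin n → R) (z : HS R) (m : ℕ) :
    diffOp a z m = z (m + n) + ∑ i : Fin n, a i * z (m + i) := rfl

theorem diffOp_eq (a : Fin n → R) (z : HS R) :
    diffOp a z = D^[n] z + ∑ i : Fin n, const (a i) * D^[(i : ℕ)] z := by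
  funext m
  simp only [diffOp_apply, add_apply, sum_apply, const_mul_apply, D_iterate_apply]

variable (R n) in
def initialValues : HS R →ₗ[R] (Fin n → R) where
  toFun z i := z i
  map_add' _ _ := rfl
  map_smul' _ _ := rfl

theorem eq_zero_of_diffOp_eq_zero {a : Fin n → R} {z : HS R} (hz : diffOp a z = 0)
    (h0 : initialValues R n z = 0) : z = 0 := by
  funext m
  induction m using Nat.strong_induction_on with
  | _ m ih =>
    obtain hm | hm := lt_or_ge m n
    · exact congrFun h0 ⟨m, hm⟩
    · obtain ⟨p, rfl⟩ := Nat.exists_eq_add_of_le' hm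
      have hsum : ∑ i : Fin n, a i * z (p + i) = 0 :=
        Finset.sum_eq_zero fun i _ => by rw [ih (p + i) (by omega), zero_apply, mul_zero]
      have hrec := congrFun hz p
      rwa [diffOp_apply, hsum, add_zero] at hrec

theorem disjoint_ker_diffOp_ker_initialValues (a : Fin n → R) :
    Disjoint (LinearMap.ker (diffOp a)) (LinearMap.ker (initialValues R n)) :=
  Submodule.disjoint_def.mpr fun _ hz h0 => eq_zero_of_diffOp_eq_zero hz h0

theorem linearIndependent_map_algebraMap_of_diffOp_eq_zero {S ι : Type*} [CommRing S]
    [IsDomain S] [Algebra R S] [FaithfulSMul R S] (a : Fin n → R) {y : ι → HS R}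
    (hy : ∀ j, diffOp a (y j) = 0) (hind : LinearIndependent R y) :
    LinearIndependent S (fun j => map (algebraMap R S) (y j)) := by
  have hspan : Submodule.span R (Set.range y) ≤ LinearMap.ker (diffOp a) :=
    Submodule.span_le.mpr (Set.range_subset_iff.mpr hy)
  have hinit : LinearIndependent R (initialValues R n ∘ y) :=
    hind.map ((disjoint_ker_diffOp_ker_initialValues a).mono_left hspan)
  have hinitS : LinearIndependent S (initialValues S n ∘ fun j => map (algebraMap R S) (y j)) :=
    linearIndependent_algebraMap_comp_iff.mpr hinit
  exact hinitS.of_comp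

end HS

theorem stmt_12_general {k : Type*} [Field k] (n : ℕ) (a : Fin n → k)
    (y : Fin n → HS k)
    (hsol : ∀ j, HS.D^[n] (y j) + ∑ i : Fin n, HS.const (a i) * HS.D^[(i : ℕ)] (y j) = 0)
    (hind : LinearIndependent k y) :
    LinearIndependent (AlgebraicClosure k)
      (fun j : Fin n => HS.map (algebraMap k (AlgebraicClosure k)) (y j)) :=
  HS.linearIndependent_map_algebraMap_of_diffOp_eq_zero a
    (fun j => (HS.diffOp_eq a (y j)).trans (hsol j)) hind

/-- `k`-linearly independent solutions `y₁, …, y_n ∈ Hk` of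
`∂ⁿ y + ∑ aᵢ ∂ⁱ y = 0` remain linearly independent over the algebraic closure `k̄`
as elements of `Hk̄`. -/
theorem stmt_12 {k : Type*} [Field k] (n : ℕ) (hn : 1 ≤ n) (a : Fin n → k)
    (y : Fin n → HS k)
    (hsol : ∀ j, HS.D^[n] (y j) + ∑ i : Fin n, HS.const (a i) * HS.D^[(i : ℕ)] (y j) = 0)
    (hind : LinearIndependent k y) :
    LinearIndependent (AlgebraicClosure k)
      (fun j : Fin n => HS.map (algebraMap k (AlgebraicClosure k)) (y j)) :=
  stmt_12_general n a y hsol hind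
end
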